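/- Let F be an imaginary quadratic field with ring of integers 𝒪_F, let 𝔟 ⊆ 𝒪_F be a nonzero ideal, and let ℓ be a prime number. Then there exists a nonzero element c ∈ 𝔟 such that the quotient group 𝔟/c𝒪_F is finite of order not divisible by ℓ. -/

import Mathlib

/-!
Write `𝔟 = 𝔟ℓ + (c)`, which is possible in any Dedekind domain. Then `(c) = 𝔟𝔞` with
`𝔞 + (ℓ) = 1` after cancelling `𝔟`. The ideal `𝔞` kills `𝔟/c𝒪_F = 𝔟/𝔟𝔞`, and `ℓ` kills any
element of order `ℓ`, so `1 = 𝔞 + (ℓ)` kills it too. Hence there is no such element, and by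
Cauchy's theorem `ℓ` does not divide the order of the quotient.
-/

open NumberField

theorem isUnit_algebraMap_iff_of_isIntegral {R S : Type*} [CommRing R] [CommRing S] [Algebra R S]
    [Algebra.IsIntegral R S] [FaithfulSMul R S] (r : R) :
    IsUnit (algebraMap R S r) ↔ IsUnit r := by
  rw [← Ideal.span_singleton_eq_top, ← Ideal.span_singleton_eq_top, ← Set.image_singleton,
    ← Ideal.map_span]
  exact Ideal.map_eq_top_iff _ (FaithfulSMul.algebraMap_injective R S)
    (Algebra.IsIntegral.isIntegral (R := R))

theorem Submodule.finite_quotient_comap_subtype {R M : Type*} [Ring R] [AddCommGroup M]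
    [Module R M] (p N : Submodule R M) [Finite (M ⧸ N)] :
    Finite (p ⧸ N.comap p.subtype) := by
  refine Finite.of_injective (Submodule.mapQ _ N p.subtype le_rfl) ?_
  rw [← LinearMap.ker_eq_bot, Submodule.ker_mapQ, Submodule.mkQ_map_self]

theorem Ideal.le_annihilator_quotient_comap_mul {R : Type*} [CommRing R] (I J : Ideal R) :
    J ≤ Module.annihilator R (I ⧸ Submodule.comap I.subtype (I * J)) := by
  intro a ha
  rw [Module.mem_annihilator]
  intro m
  obtain ⟨⟨x, hx⟩, rfl⟩ := Submodule.Quotient.mk_surjective _ m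
  rw [← Submodule.Quotient.mk_smul, Submodule.Quotient.mk_eq_zero, Submodule.mem_comap]
  exact Ideal.mul_mem_mul_rev hx ha

theorem not_dvd_natCard_of_le_annihilator {R M : Type*} [CommRing R] [AddCommGroup M] [Module R M]
    [Finite M] {I : Ideal R} {p : ℕ} (hp : p.Prime) (hI : I ≤ Module.annihilator R M)
    (hIp : I ⊔ Ideal.span {(p : R)} = ⊤) : ¬ p ∣ Nat.card M := by
  intro hdvd
  have := Fact.mk hp
  obtain ⟨g, hg⟩ := exists_prime_addOrderOf_dvd_card' p hdvd
  have hker : I ⊔ Ideal.span {(p : R)} ≤ LinearMap.ker (LinearMap.toSpanSingleton R M g) := by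
    refine sup_le (fun a ha => Module.mem_annihilator.mp (hI ha) g) ?_
    rw [Ideal.span_singleton_le_iff_mem, LinearMap.mem_ker, LinearMap.toSpanSingleton_apply,
      Nat.cast_smul_eq_nsmul, ← hg, addOrderOf_nsmul_eq_zero]
  have hg0 : g = 0 := by simpa using hker (hIp ▸ Submodule.mem_top : (1 : R) ∈ _)
  rw [hg0, addOrderOf_zero] at hg
  exact hp.ne_one hg.symm

theorem IsDedekindDomain.exists_span_singleton_eq_mul_sup_eq_top {R : Type*} [CommRing R]
    [IsDedekindDomain R] {I L : Ideal R} (hI : I ≠ ⊥) (hL : L ≠ ⊥) (hL' : L ≠ ⊤) :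
    ∃ c J, c ≠ 0 ∧ Ideal.span {c} = I * J ∧ J ⊔ L = ⊤ := by
  obtain ⟨c, hc⟩ := exists_sup_span_eq (Ideal.mul_le_left : I * L ≤ I) (mul_ne_zero hI hL)
  obtain ⟨J, hJ⟩ := Ideal.dvd_iff_le.mpr (le_sup_right.trans hc.le : Ideal.span {c} ≤ I)
  have hJL : J ⊔ L = ⊤ := by
    refine mul_left_cancel₀ hI ?_
    rw [Ideal.mul_sup, ← hJ, sup_comm, hc, Ideal.mul_top]
  refine ⟨c, J, ?_, hJ, hJL⟩
  rintro rfl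
  have hJ0 : J = ⊥ := by simpa [hI] using hJ.symm
  exact hL' (by simpa [hJ0] using hJL)

theorem exists_gen_of_index_coprime_general
    (F : Type*) [Field F] [NumberField F]
    (𝔟 : Ideal (𝓞 F)) (h𝔟 : 𝔟 ≠ ⊥)
    (ℓ : ℕ) (hℓ : ℓ.Prime) :
    ∃ c ∈ 𝔟, c ≠ 0 ∧
      Finite (𝔟 ⧸ (Submodule.comap 𝔟.subtype (Ideal.span {c}))) ∧
      ¬ (ℓ ∣ Nat.card (𝔟 ⧸ (Submodule.comap 𝔟.subtype (Ideal.span {c})))) := by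
  have hℓ0 : Ideal.span {(ℓ : 𝓞 F)} ≠ ⊥ := by simpa using hℓ.ne_zero
  have hℓ1 : Ideal.span {(ℓ : 𝓞 F)} ≠ ⊤ := by
    rw [Ne, Ideal.span_singleton_eq_top, ← map_natCast (algebraMap ℤ (𝓞 F)),
      isUnit_algebraMap_iff_of_isIntegral, Int.isUnit_iff_natAbs_eq, Int.natAbs_natCast]
    exact hℓ.ne_one
  obtain ⟨c, 𝔞, hc0, hc, h𝔞ℓ⟩ :=
    IsDedekindDomain.exists_span_singleton_eq_mul_sup_eq_top h𝔟 hℓ0 hℓ1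
  have := Ideal.finiteQuotientOfFreeOfNeBot _ (by simpa using hc0 : Ideal.span {c} ≠ ⊥)
  have hfin : Finite (𝔟 ⧸ Submodule.comap 𝔟.subtype (Ideal.span {c})) :=
    Submodule.finite_quotient_comap_subtype _ _
  refine ⟨c, Ideal.mul_le_left (hc ▸ Ideal.mem_span_singleton_self c), hc0, hfin, ?_⟩
  rw [hc] at hfin ⊢
  exact not_dvd_natCard_of_le_annihilator hℓ (Ideal.le_annihilator_quotient_comap_mul 𝔟 𝔞) h𝔞ℓ

/-- **Lemma of Section 11.** Let `F` be an imaginary quadratic field with ring of integers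
`𝒪_F`, let `𝔟 ⊆ 𝒪_F` be a nonzero ideal, and let `ℓ` be a prime number. Then there exists a
nonzero element `c ∈ 𝔟` such that the quotient group `𝔟/c𝒪_F` is finite of order not
divisible by `ℓ`. -/
theorem exists_gen_of_index_coprime
    (F : Type*) [Field F] [NumberField F]
    (hquad : Module.finrank ℚ F = 2)
    (himag : ∀ v : InfinitePlace F, v.IsComplex)
    (𝔟 : Ideal (𝓞 F)) (h𝔟 : 𝔟 ≠ ⊥)
    (ℓ : ℕ) (hℓ : ℓ.Prime) :
    ∃ c ∈ 𝔟, c ≠ 0 ∧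
      Finite (𝔟 ⧸ (Submodule.comap 𝔟.subtype (Ideal.span {c}))) ∧
      ¬ (ℓ ∣ Nat.card (𝔟 ⧸ (Submodule.comap 𝔟.subtype (Ideal.span {c})))) :=
  exists_gen_of_index_coprime_general F 𝔟 h𝔟 ℓ hℓ
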